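/- Let ε > 0 and let X₀ = H¹_ℂ(0,1). Then the operators f ↦ Sign_ε(F(f)) from X₀ to Y and f ↦ |f| from X₀ to L²(0,1) are weak-to-strong sequentially continuous: whenever f_n ⇀ f weakly in X₀, one has Sign_ε(F(f_n)) → Sign_ε(F(f)) in the norm of Y and |f_n| → |f| in the norm of L²(0,1). -/

import Mathlib

open MeasureTheory Complex Set Filter Topology
open scoped ENNReal

noncomputable section

/-- Lebesgue measure restricted to `(0,1)`. -/
abbrev μ1 : Measure ℝ := volume.restrict (Set.Ioo (0:ℝ) 1)
/-- Lebesgue measure restricted to `(0,2)`. -/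
abbrev μ2 : Measure ℝ := volume.restrict (Set.Ioo (0:ℝ) 2)
/-- `X = L²_ℂ(0,1)`. -/
abbrev X : Type := Lp ℂ 2 μ1
/-- `Y = L²_ℂ(0,2)`. -/
abbrev Y : Type := Lp ℂ 2 μ2
/-- The parallelogram `𝔓 = {(s,τ) : 0 ≤ τ ≤ 1, τ ≤ s ≤ τ+1}`. -/
def Par : Set (ℝ × ℝ) := {p | 0 ≤ p.2 ∧ p.2 ≤ 1 ∧ p.2 ≤ p.1 ∧ p.1 ≤ p.2 + 1}

/-- Weak (sequential) convergence of a sequence in a complex inner product space. -/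
def WConv {E : Type*} [NormedAddCommGroup E] [InnerProductSpace ℂ E]
    (u : ℕ → E) (x : E) : Prop :=
  ∀ g : E, Tendsto (fun n => (inner ℂ (u n) g : ℂ)) atTop (𝓝 (inner ℂ x g))

/-- `f ∈ H¹_ℂ(0,1)` with weak derivative `d`: `f` has an absolutely continuous representative
`f(x) = c + ∫₀ˣ d(t) dt` on `(0,1)` with `d ∈ L²_ℂ(0,1)`. -/
def InH1 (f d : X) : Prop :=
  ∃ c : ℂ, ∀ᵐ x ∂μ1, f x = c + ∫ t in (0:ℝ)..x, d t

/-! Weak convergence in `H¹(0,1)` implies strong convergence in `L²(0,1)`: the primitives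
`x ↦ ∫₀ˣ Dₙ = ⟪𝟙_(0,x), Dₙ⟫` converge pointwise and are bounded by `supₙ ‖Dₙ‖`
(Banach–Steinhaus), the constants of integration converge because `∫ fₙ` does, and bounded
convergence gives `fₙ → f` in `L²`. Both claims then follow from strong convergence: `|·|` is
1-Lipschitz; by Cauchy–Schwarz, `|F(u)(s) - F(v)(s)| ≤ K (‖u‖ + ‖v‖) ‖u - v‖` with `K` a bound
for `k` on the compact set `𝔓`; and `z ↦ z / max(ε, |z|)` is `2/ε`-Lipschitz. -/

theorem norm_div_max_sub_div_max_le {𝕜 : Type*} [RCLike 𝕜] {ε : ℝ} (hε : 0 < ε) (z w : 𝕜) :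
    ‖z / ((max ε ‖z‖ : ℝ) : 𝕜) - w / ((max ε ‖w‖ : ℝ) : 𝕜)‖ ≤ 2 / ε * ‖z - w‖ := by
  set a := max ε ‖z‖
  set b := max ε ‖w‖
  have ha : 0 < a := hε.trans_le (le_max_left _ _)
  have hb : 0 < b := hε.trans_le (le_max_left _ _)
  have hwb : ‖w / (b : 𝕜)‖ ≤ 1 := by
    rw [norm_div, RCLike.norm_of_nonneg hb.le]
    exact div_le_one_of_le₀ (le_max_right _ _) hb.le
  have hba : |b - a| ≤ ‖z - w‖ :=
    (abs_max_sub_max_le_max _ _ _ _).trans (by simpa [norm_sub_rev] using abs_norm_sub_norm_le w z)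
  have split : z / (a : 𝕜) - w / (b : 𝕜) = (z - w) / a + w / b * ((b - a : ℝ) / a) := by
    have : (a : 𝕜) ≠ 0 := RCLike.ofReal_ne_zero.2 ha.ne'
    have : (b : 𝕜) ≠ 0 := RCLike.ofReal_ne_zero.2 hb.ne'
    push_cast
    field_simp
    ring
  calc ‖z / (a : 𝕜) - w / (b : 𝕜)‖
      ≤ ‖z - w‖ / a + 1 * (‖z - w‖ / a) := by
        rw [split]
        refine (norm_add_le _ _).trans (add_le_add ?_ ?_)
        · rw [norm_div, RCLike.norm_of_nonneg ha.le]
        · rw [norm_mul]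
          refine mul_le_mul hwb ?_ (norm_nonneg _) zero_le_one
          rw [← RCLike.ofReal_div, RCLike.norm_ofReal, abs_div, abs_of_pos ha]
          gcongr
    _ = 2 * ‖z - w‖ / a := by ring
    _ ≤ 2 * ‖z - w‖ / ε := by gcongr; exact le_max_left _ _
    _ = 2 / ε * ‖z - w‖ := by ring

theorem norm_sub_le_of_ae_eq_div_max {α 𝕜 : Type*} [MeasurableSpace α] {μ : Measure α}
    [IsFiniteMeasure μ] [RCLike 𝕜] {p : ℝ≥0∞} [Fact (1 ≤ p)] {ε : ℝ} (hε : 0 < ε)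
    {Sε : Lp 𝕜 p μ → Lp 𝕜 p μ}
    (hS : ∀ g : Lp 𝕜 p μ, ∀ᵐ s ∂μ, Sε g s = g s / ((max ε ‖g s‖ : ℝ) : 𝕜))
    {g h : Lp 𝕜 p μ} {C : ℝ} (hC : 0 ≤ C) (hgh : ∀ᵐ s ∂μ, ‖g s - h s‖ ≤ C) :
    ‖Sε g - Sε h‖ ≤ measureUnivNNReal μ ^ p.toReal⁻¹ * (2 / ε * C) := by
  refine Lp.norm_le_of_ae_bound (by positivity) ?_
  filter_upwards [Lp.coeFn_sub (Sε g) (Sε h), hS g, hS h, hgh] with s hsub hg hh hC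
  rw [hsub, Pi.sub_apply, hg, hh]
  exact (norm_div_max_sub_div_max_le hε _ _).trans (by gcongr)

theorem tendsto_comp_of_norm_sub_le {E F ι : Type*} [SeminormedAddCommGroup E]
    [SeminormedAddCommGroup F] {Φ : E → F} {L : ℝ} {v : E}
    (hΦ : ∀ u, ‖Φ u - Φ v‖ ≤ L * ((‖u‖ + ‖v‖) * ‖u - v‖)) {l : Filter ι} {u : ι → E}
    (hu : Tendsto u l (𝓝 v)) : Tendsto (fun n => Φ (u n)) l (𝓝 (Φ v)) := by
  rw [tendsto_iff_norm_sub_tendsto_zero] at hu ⊢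
  refine squeeze_zero (fun _ => norm_nonneg _) (fun n => hΦ (u n)) ?_
  simpa using (((tendsto_norm.comp (tendsto_iff_norm_sub_tendsto_zero.2 hu)).add
    tendsto_const_nhds).mul hu).const_mul L

theorem tendsto_eLpNorm_sub_of_ae_bound {α β : Type*} {m : MeasurableSpace α} {μ : Measure α}
    [NormedAddCommGroup β] [IsFiniteMeasure μ] {p : ℝ≥0∞} (hp : 1 ≤ p) (hp' : p ≠ ∞)
    {f : ℕ → α → β} {g : α → β} {C : ℝ} (hf : ∀ n, AEStronglyMeasurable (f n) μ)
    (hg : MemLp g p μ) (hbound : ∀ n, ∀ᵐ x ∂μ, ‖f n x‖ ≤ C)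
    (hlim : ∀ᵐ x ∂μ, Tendsto (fun n => f n x) atTop (𝓝 (g x))) :
    Tendsto (fun n => eLpNorm (f n - g) p μ) atTop (𝓝 0) := by
  refine tendsto_Lp_finite_of_tendsto_ae hp hp' hf hg
    (unifIntegrable_of hp hp' hf fun ε _ => ⟨C.toNNReal + 1, fun n => ?_⟩) hlim
  have : {x | C.toNNReal + 1 ≤ ‖f n x‖₊}.indicator (f n) =ᵐ[μ] 0 := by
    filter_upwards [hbound n] with x hx
    refine Set.indicator_of_notMem (fun hC => ?_) _
    have := NNReal.coe_le_coe.2 hC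
    push_cast at this
    linarith [Real.le_coe_toNNReal C]
  rw [eLpNorm_congr_ae this, eLpNorm_zero]
  exact zero_le

section WeakConvergence

variable {E : Type*} [NormedAddCommGroup E] [InnerProductSpace ℂ E] {u : ℕ → E} {x : E}

theorem WConv.tendsto_inner_left (h : WConv u x) (g : E) :
    Tendsto (fun n => inner ℂ g (u n)) atTop (𝓝 (inner ℂ g x)) := by
  simpa only [Function.comp_def, inner_conj_symm] using
    (Complex.continuous_conj.tendsto _).comp (h g)

theorem WConv.exists_norm_le [CompleteSpace E] (h : WConv u x) : ∃ C, ∀ n, ‖u n‖ ≤ C := by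
  obtain ⟨C, hC⟩ := banach_steinhaus (g := fun n => innerSL ℂ (u n)) fun g =>
    ((h g).norm.bddAbove_range).imp fun C hC n => hC ⟨n, rfl⟩
  exact ⟨C, fun n => by simpa only [innerSL_apply_norm] using hC n⟩

end WeakConvergence

section ShiftedProduct

variable {κ : ℝ → ℂ} {S : Set ℝ} {K : ℝ} {g h : ℝ → ℂ}

theorem setLIntegral_enorm_mul_shift_mul_le (hS : MeasurableSet S) (hκ : ∀ τ ∈ S, ‖κ τ‖ ≤ K)
    (hg : AEStronglyMeasurable g) (hh : AEStronglyMeasurable h) (s : ℝ) :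
    ∫⁻ τ in S, ‖κ τ * g (s - τ) * h τ‖ₑ
      ≤ ENNReal.ofReal K * (eLpNorm g 2 volume * eLpNorm h 2 volume) := by
  have hshift := Measure.measurePreserving_sub_left volume s
  calc ∫⁻ τ in S, ‖κ τ * g (s - τ) * h τ‖ₑ
      ≤ ∫⁻ τ in S, ENNReal.ofReal K * ‖g (s - τ) * h τ‖ₑ := by
        refine setLIntegral_mono' hS fun τ hτ => ?_
        rw [mul_assoc, enorm_mul, ← ofReal_norm]
        gcongr
        exact hκ τ hτ
    _ = ENNReal.ofReal K * ∫⁻ τ in S, ‖g (s - τ) * h τ‖ₑ :=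
        lintegral_const_mul' _ _ ENNReal.ofReal_ne_top
    _ ≤ ENNReal.ofReal K * eLpNorm ((fun τ => g (s - τ)) • h) 1 volume := by
        rw [eLpNorm_one_eq_lintegral_enorm]
        gcongr
        · exact Measure.restrict_le_self
        · rfl
    _ ≤ ENNReal.ofReal K * (eLpNorm (g ∘ fun τ => s - τ) 2 volume * eLpNorm h 2 volume) := by
        gcongr
        exact eLpNorm_smul_le_mul_eLpNorm hh (hg.comp_measurePreserving hshift)
    _ = ENNReal.ofReal K * (eLpNorm g 2 volume * eLpNorm h 2 volume) := by
        rw [eLpNorm_comp_measurePreserving hg hshift]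

theorem integrableOn_mul_shift_mul (hS : MeasurableSet S) (hκ : ∀ τ ∈ S, ‖κ τ‖ ≤ K)
    (hκm : AEStronglyMeasurable κ (volume.restrict S)) (hg : MemLp g 2) (hh : MemLp h 2)
    (s : ℝ) : IntegrableOn (fun τ => κ τ * g (s - τ) * h τ) S := by
  refine ⟨(hκm.mul ?_).mul hh.1.restrict, ?_⟩
  · exact (hg.1.comp_measurePreserving (Measure.measurePreserving_sub_left volume s)).restrict
  · exact (setLIntegral_enorm_mul_shift_mul_le hS hκ hg.1 hh.1 s).trans_lt <| by
      have := hg.2; have := hh.2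
      finiteness

theorem norm_setIntegral_mul_shift_mul_le (hS : MeasurableSet S) (hK : 0 ≤ K)
    (hκ : ∀ τ ∈ S, ‖κ τ‖ ≤ K) (hg : MemLp g 2) (hh : MemLp h 2) (s : ℝ) :
    ‖∫ τ in S, κ τ * g (s - τ) * h τ‖
      ≤ K * ((eLpNorm g 2 volume).toReal * (eLpNorm h 2 volume).toReal) := by
  have hle := (enorm_integral_le_lintegral_enorm _).trans
    (setLIntegral_enorm_mul_shift_mul_le hS hκ hg.1 hh.1 s)
  have := ENNReal.toReal_mono (by have := hg.2; have := hh.2; finiteness) hle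
  rwa [toReal_enorm, ENNReal.toReal_mul, ENNReal.toReal_mul, ENNReal.toReal_ofReal hK] at this

theorem norm_setIntegral_autoconv_sub_le (hS : MeasurableSet S) (hK : 0 ≤ K)
    (hκ : ∀ τ ∈ S, ‖κ τ‖ ≤ K) (hκm : AEStronglyMeasurable κ (volume.restrict S))
    (hg : MemLp g 2) (hh : MemLp h 2) (s : ℝ) :
    ‖(∫ τ in S, κ τ * g (s - τ) * g τ) - ∫ τ in S, κ τ * h (s - τ) * h τ‖
      ≤ K * (((eLpNorm g 2 volume).toReal + (eLpNorm h 2 volume).toReal) *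
        (eLpNorm (g - h) 2 volume).toReal) := by
  have hgh := hg.sub hh
  have split : (∫ τ in S, κ τ * g (s - τ) * g τ) - ∫ τ in S, κ τ * h (s - τ) * h τ
      = (∫ τ in S, κ τ * g (s - τ) * (g - h) τ) + ∫ τ in S, κ τ * (g - h) (s - τ) * h τ := by
    rw [← integral_sub (integrableOn_mul_shift_mul hS hκ hκm hg hg s)
        (integrableOn_mul_shift_mul hS hκ hκm hh hh s),
      ← integral_add (integrableOn_mul_shift_mul hS hκ hκm hg hgh s)
        (integrableOn_mul_shift_mul hS hκ hκm hgh hh s)]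
    congr 1 with τ
    simp only [Pi.sub_apply]
    ring
  rw [split]
  calc _ ≤ K * ((eLpNorm g 2 volume).toReal * (eLpNorm (g - h) 2 volume).toReal) +
          K * ((eLpNorm (g - h) 2 volume).toReal * (eLpNorm h 2 volume).toReal) :=
        (norm_add_le _ _).trans (add_le_add
          (norm_setIntegral_mul_shift_mul_le hS hK hκ hg hgh s)
          (norm_setIntegral_mul_shift_mul_le hS hK hκ hgh hh s))
    _ = _ := by ring

end ShiftedProduct

section Primitive

variable {fn Dn : ℕ → X} {f d : X}

def indicatorIoo (x : ℝ) : X :=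
  indicatorConstLp 2 (measurableSet_Ioo (a := 0) (b := x)) (measure_ne_top μ1 _) (1 : ℂ)

theorem inner_indicatorIoo (D : X) {x : ℝ} (hx : x ≤ 1) :
    inner ℂ (indicatorIoo x) D = ∫ t in Ioo 0 x, D t := by
  rw [indicatorIoo, L2.inner_indicatorConstLp_one, Measure.restrict_restrict measurableSet_Ioo,
    Set.inter_eq_left.2 (Ioo_subset_Ioo_right hx)]

theorem norm_indicatorIoo_le (x : ℝ) : ‖indicatorIoo x‖ ≤ 1 := by
  rw [indicatorIoo, norm_indicatorConstLp (by norm_num) (by norm_num), norm_one, one_mul]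
  refine Real.rpow_le_one measureReal_nonneg ?_ (by norm_num)
  calc μ1.real (Ioo 0 x) ≤ μ1.real univ := measureReal_mono (subset_univ _)
    _ = 1 := by simp

theorem primitive_eq_inner_indicatorIoo (D : X) {x : ℝ} (hx0 : 0 ≤ x) (hx1 : x ≤ 1) :
    ∫ t in (0 : ℝ)..x, D t = inner ℂ (indicatorIoo x) D := by
  rw [inner_indicatorIoo D hx1, intervalIntegral.integral_of_le hx0, integral_Ioc_eq_integral_Ioo]

theorem norm_primitive_le (D : X) {x : ℝ} (hx0 : 0 ≤ x) (hx1 : x ≤ 1) :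
    ‖∫ t in (0 : ℝ)..x, D t‖ ≤ ‖D‖ := by
  rw [primitive_eq_inner_indicatorIoo D hx0 hx1]
  exact (norm_inner_le_norm _ _).trans
    (mul_le_of_le_one_left (norm_nonneg _) (norm_indicatorIoo_le x))

theorem aestronglyMeasurable_primitive (D : X) :
    AEStronglyMeasurable (fun x => ∫ t in (0 : ℝ)..x, D t) μ1 := by
  have hcont := intervalIntegral.continuousOn_primitive_interval (a := 0) (b := 1)
    (μ := volume) (f := D) (by
      rw [uIcc_of_le zero_le_one]
      exact (integrableOn_Icc_iff_integrableOn_Ioo).mpr ((Lp.memLp D).integrable one_le_two))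
  rw [uIcc_of_le zero_le_one] at hcont
  exact (hcont.mono Ioo_subset_Icc_self).aestronglyMeasurable measurableSet_Ioo

theorem const_eq_integral_sub_integral_primitive {g D : X} {c : ℂ}
    (h : ∀ᵐ x ∂μ1, g x = c + ∫ t in (0 : ℝ)..x, D t) :
    c = ∫ x, g x ∂μ1 - ∫ x, (∫ t in (0 : ℝ)..x, D t) ∂μ1 := by
  have hP : Integrable (fun x => ∫ t in (0 : ℝ)..x, D t) μ1 :=
    Integrable.of_bound (aestronglyMeasurable_primitive D) ‖D‖ <| by
      filter_upwards [ae_restrict_mem measurableSet_Ioo] with x hx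
      exact norm_primitive_le D hx.1.le hx.2.le
  rw [integral_congr_ae h, integral_add (integrable_const c) hP]
  simp

theorem WConv.tendsto_integral (h : WConv fn f) :
    Tendsto (fun n => ∫ x, fn n x ∂μ1) atTop (𝓝 (∫ x, f x ∂μ1)) := by
  simpa only [inner_indicatorIoo _ le_rfl] using h.tendsto_inner_left (indicatorIoo 1)

theorem WConv.tendsto_primitive (h : WConv Dn d) {x : ℝ} (hx0 : 0 ≤ x) (hx1 : x ≤ 1) :
    Tendsto (fun n => ∫ t in (0 : ℝ)..x, Dn n t) atTop (𝓝 (∫ t in (0 : ℝ)..x, d t)) := by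
  simpa only [primitive_eq_inner_indicatorIoo _ hx0 hx1] using
    h.tendsto_inner_left (indicatorIoo x)

theorem WConv.tendsto_integral_primitive (h : WConv Dn d) :
    Tendsto (fun n => ∫ x, (∫ t in (0 : ℝ)..x, Dn n t) ∂μ1) atTop
      (𝓝 (∫ x, (∫ t in (0 : ℝ)..x, d t) ∂μ1)) := by
  obtain ⟨C, hC⟩ := h.exists_norm_le
  refine tendsto_integral_of_dominated_convergence (fun _ => C)
    (fun n => aestronglyMeasurable_primitive (Dn n)) (integrable_const C) (fun n => ?_) ?_
  · filter_upwards [ae_restrict_mem measurableSet_Ioo] with x hx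
    exact (norm_primitive_le _ hx.1.le hx.2.le).trans (hC n)
  · filter_upwards [ae_restrict_mem measurableSet_Ioo] with x hx
    exact h.tendsto_primitive hx.1.le hx.2.le

theorem tendsto_of_wConv_of_inH1 (hfn : ∀ n, InH1 (fn n) (Dn n)) (hf : InH1 f d)
    (hw : WConv fn f) (hwD : WConv Dn d) : Tendsto fn atTop (𝓝 f) := by
  choose cn hcn using hfn
  obtain ⟨c, hc⟩ := hf
  have hc_lim : Tendsto cn atTop (𝓝 c) := by
    rw [funext fun n => const_eq_integral_sub_integral_primitive (hcn n),
      const_eq_integral_sub_integral_primitive hc]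
    exact hw.tendsto_integral.sub hwD.tendsto_integral_primitive
  obtain ⟨Cc, hCc⟩ := hc_lim.norm.bddAbove_range
  obtain ⟨CD, hCD⟩ := hwD.exists_norm_le
  rw [Lp.tendsto_Lp_iff_tendsto_eLpNorm']
  refine tendsto_eLpNorm_sub_of_ae_bound one_le_two ENNReal.ofNat_ne_top (C := Cc + CD)
    (fun n => Lp.aestronglyMeasurable (fn n)) (Lp.memLp f) (fun n => ?_) ?_
  · filter_upwards [hcn n, ae_restrict_mem measurableSet_Ioo] with x hx hx01
    rw [hx]
    exact (norm_add_le _ _).trans (add_le_add (hCc ⟨n, rfl⟩)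
      ((norm_primitive_le _ hx01.1.le hx01.2.le).trans (hCD n)))
  · filter_upwards [ae_all_iff.2 hcn, hc, ae_restrict_mem measurableSet_Ioo] with x hx hx' hx01
    simp only [hx, hx']
    exact hc_lim.add (hwD.tendsto_primitive hx01.1.le hx01.2.le)

end Primitive

-- The coercion of `u : X` is an arbitrary representative off `(0,1)`, so the shifted products
-- `u (s - τ) * u τ` are only controlled after extending `u` by zero.
def extendByZero (u : X) : ℝ → ℂ := (Ioo 0 1).indicator u

theorem memLp_extendByZero (u : X) : MemLp (extendByZero u) 2 :=
  (memLp_indicator_iff_restrict measurableSet_Ioo).2 (Lp.memLp u)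

theorem toReal_eLpNorm_extendByZero (u : X) :
    (eLpNorm (extendByZero u) 2 volume).toReal = ‖u‖ := by
  rw [extendByZero, eLpNorm_indicator_eq_eLpNorm_restrict measurableSet_Ioo, Lp.norm_def]

theorem toReal_eLpNorm_extendByZero_sub (u v : X) :
    (eLpNorm (extendByZero u - extendByZero v) 2 volume).toReal = ‖u - v‖ := by
  rw [extendByZero, extendByZero, ← indicator_sub',
    eLpNorm_indicator_eq_eLpNorm_restrict measurableSet_Ioo, Lp.norm_def,
    eLpNorm_congr_ae (Lp.coeFn_sub u v)]

theorem isCompact_Par : IsCompact Par := by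
  refine (isCompact_Icc.prod isCompact_Icc : IsCompact (Icc (0 : ℝ) 2 ×ˢ Icc (0 : ℝ) 1))
    |>.of_isClosed_subset ?_ ?_
  · exact (isClosed_le continuous_const continuous_snd).inter
      ((isClosed_le continuous_snd continuous_const).inter
        ((isClosed_le continuous_snd continuous_fst).inter
          (isClosed_le continuous_fst (continuous_snd.add continuous_const))))
  · rintro ⟨s, τ⟩ ⟨h0, h1, hτs, hsτ⟩
    exact ⟨⟨h0.trans hτs, by linarith⟩, h0, h1⟩

theorem exists_norm_le_of_continuousOn_Par {k : ℝ × ℝ → ℂ} (hk : ContinuousOn k Par) :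
    ∃ K, 0 ≤ K ∧ ∀ p ∈ Par, ‖k p‖ ≤ K := by
  obtain ⟨K, hK⟩ := isCompact_Par.exists_bound_of_continuousOn hk
  exact ⟨K, (norm_nonneg _).trans (hK (0, 0) (by simp [Par])), hK⟩

theorem mk_mem_Par {s τ : ℝ} (h1 : max (s - 1) 0 ≤ τ) (h2 : τ ≤ min s 1) : (s, τ) ∈ Par := by
  simp only [max_le_iff, le_min_iff] at h1 h2
  exact ⟨h1.2, h2.2, h2.1, by linarith⟩

theorem norm_autoconv_sub_le {k : ℝ × ℝ → ℂ} (hk : ContinuousOn k Par) {K : ℝ} (hK0 : 0 ≤ K)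
    (hK : ∀ p ∈ Par, ‖k p‖ ≤ K) (u v : X) {s : ℝ} (hs : s ∈ Icc (0 : ℝ) 2) :
    ‖(∫ τ in (max (s - 1) 0)..(min s 1), k (s, τ) * u (s - τ) * u τ)
        - ∫ τ in (max (s - 1) 0)..(min s 1), k (s, τ) * v (s - τ) * v τ‖
      ≤ K * ((‖u‖ + ‖v‖) * ‖u - v‖) := by
  set a := max (s - 1) 0
  set b := min s 1
  have hab : a ≤ b := max_le (le_min (by linarith) (by linarith [hs.2])) (le_min hs.1 zero_le_one)
  have hPar : ∀ τ ∈ Ioo a b, (s, τ) ∈ Par := fun τ hτ => mk_mem_Par hτ.1.le hτ.2.le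
  have hext : ∀ w : X, ∫ τ in a..b, k (s, τ) * w (s - τ) * w τ
      = ∫ τ in Ioo a b, k (s, τ) * extendByZero w (s - τ) * extendByZero w τ := fun w => by
    rw [intervalIntegral.integral_of_le hab, integral_Ioc_eq_integral_Ioo]
    refine setIntegral_congr_fun measurableSet_Ioo fun τ hτ => ?_
    obtain ⟨haτ, hτb⟩ := hτ
    simp only [a, b, max_lt_iff, lt_min_iff] at haτ hτb
    have h1 : τ ∈ Ioo (0 : ℝ) 1 := ⟨haτ.2, hτb.2⟩
    have h2 : s - τ ∈ Ioo (0 : ℝ) 1 := ⟨by linarith, by linarith⟩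
    simp only [extendByZero, indicator_of_mem h1, indicator_of_mem h2]
  have hkm : AEStronglyMeasurable (fun τ => k (s, τ)) (volume.restrict (Ioo a b)) :=
    (hk.comp (Continuous.continuousOn (by fun_prop)) hPar).aestronglyMeasurable measurableSet_Ioo
  rw [hext, hext, ← toReal_eLpNorm_extendByZero u, ← toReal_eLpNorm_extendByZero v,
    ← toReal_eLpNorm_extendByZero_sub]
  exact norm_setIntegral_autoconv_sub_le measurableSet_Ioo hK0 (fun τ hτ => hK _ (hPar τ hτ))
    hkm (memLp_extendByZero u) (memLp_extendByZero v) s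

theorem stmt16_general (k : ℝ × ℝ → ℂ) (hk_cont : ContinuousOn k Par)
    (F : X → Y)
    (hF : ∀ f : X, ∀ᵐ s ∂μ2,
      F f s = ∫ τ in (max (s - 1) 0)..(min s 1), k (s, τ) * f (s - τ) * f τ)
    (ε : ℝ) (hε : 0 < ε)
    (Sε : Y → Y)
    (hS : ∀ g : Y, ∀ᵐ s ∂μ2,
      Sε g s = g s / ((max ε ‖g s‖ : ℝ) : ℂ))
    (fn : ℕ → X) (Dn : ℕ → X) (f d : X)
    (hfn : ∀ n, InH1 (fn n) (Dn n)) (hf : InH1 f d)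
    (hw : WConv fn f) (hwD : WConv Dn d) :
    Tendsto (fun n => Sε (F (fn n))) atTop (𝓝 (Sε (F f))) ∧
    Tendsto (fun n =>
        eLpNorm (fun τ => ‖fn n τ‖ - ‖f τ‖) 2 μ1)
      atTop (𝓝 0) := by
  have hstrong := tendsto_of_wConv_of_inH1 hfn hf hw hwD
  obtain ⟨K, hK0, hK⟩ := exists_norm_le_of_continuousOn_Par hk_cont
  have hF_sub (u v : X) : ∀ᵐ s ∂μ2, ‖F u s - F v s‖ ≤ K * ((‖u‖ + ‖v‖) * ‖u - v‖) := by
    filter_upwards [hF u, hF v, ae_restrict_mem measurableSet_Ioo] with s hu hv hs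
    rw [hu, hv]
    exact norm_autoconv_sub_le hk_cont hK0 hK u v (Ioo_subset_Icc_self hs)
  refine ⟨tendsto_comp_of_norm_sub_le (Φ := fun u => Sε (F u))
    (L := measureUnivNNReal μ2 ^ (2 : ℝ≥0∞).toReal⁻¹ * (2 / ε) * K) (fun u => ?_) hstrong, ?_⟩
  · refine (norm_sub_le_of_ae_eq_div_max hε hS (by positivity) (hF_sub u f)).trans_eq ?_
    ring
  · rw [Lp.tendsto_Lp_iff_tendsto_eLpNorm'] at hstrong
    refine tendsto_of_tendsto_of_tendsto_of_le_of_le tendsto_const_nhds hstrong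
      (fun _ => zero_le) fun n => eLpNorm_mono fun τ => ?_
    simpa using abs_norm_sub_norm_le (fn n τ) (f τ)

/-- Let `ε > 0` and `X₀ = H¹_ℂ(0,1)` (encoded by pairs `(f,d)` with
`InH1 f d`; weak convergence in `X₀` is weak `L²`-convergence of the functions and of their
derivatives). Then `f ↦ Sign_ε(F(f))` and `f ↦ |f|` are weak-to-strong sequentially
continuous: `f_n ⇀ f` in `X₀` implies `Sign_ε(F(f_n)) → Sign_ε(F(f))` in `Y` and
`|f_n| → |f|` in `L²(0,1)`. -/
theorem stmt16 (k : ℝ × ℝ → ℂ) (hk_cont : ContinuousOn k Par)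
    (hk_supp : ∀ p, p ∉ Par → k p = 0)
    (hk_symm : ∀ p ∈ Par, k p = k (p.1, p.1 - p.2))
    (F : X → Y)
    (hF : ∀ f : X, ∀ᵐ s ∂μ2,
      F f s = ∫ τ in (max (s - 1) 0)..(min s 1), k (s, τ) * f (s - τ) * f τ)
    (ε : ℝ) (hε : 0 < ε)
    (Sε : Y → Y)
    (hS : ∀ g : Y, ∀ᵐ s ∂μ2,
      Sε g s = g s / ((max ε ‖g s‖ : ℝ) : ℂ))
    (fn : ℕ → X) (Dn : ℕ → X) (f d : X)
    (hfn : ∀ n, InH1 (fn n) (Dn n)) (hf : InH1 f d)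
    (hw : WConv fn f) (hwD : WConv Dn d) :
    Tendsto (fun n => Sε (F (fn n))) atTop (𝓝 (Sε (F f))) ∧
    Tendsto (fun n =>
        eLpNorm (fun τ => ‖fn n τ‖ - ‖f τ‖) 2 μ1)
      atTop (𝓝 0) :=
  stmt16_general k hk_cont F hF ε hε Sε hS fn Dn f d hfn hf hw hwD
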